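/- Let C = P + εQ be a monic motion polynomial in 𝔻ℍ[t] (P, Q ∈ ℍ[t]), and let M ∈ ℝ[t] be a monic real quadratic factor of ν(C) that is not a pseudofactor of C, i.e. S := lrem(C, M) satisfies ν(S) = S·S̄ ≠ 0. Then S is linear with invertible leading coefficient and has a unique right zero h ∈ 𝔻ℍ. -/

import Mathlib

open Polynomial DualNumber

/-- The dual quaternions `ℍ ⊕ εℍ` with `ε` central and `ε² = 0`. -/
abbrev DH : Type := DualNumber (Quaternion ℝ)

/-- Conjugation of a dual quaternion: quaternion conjugation in both components. -/
def dconj (x : DH) : DH := (star x.fst, star x.snd)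

/-- Coefficientwise conjugation of a left polynomial over the dual quaternions. -/
noncomputable def dpconj (p : Polynomial DH) : Polynomial DH :=
  ⟨AddMonoidAlgebra.ofCoeff (Finsupp.mapRange dconj (by simp [dconj]; try rfl) p.toFinsupp.coeff)⟩

/-! Since `M` is real, it is central, so `M ∣ F·F̄` and `F ≡ S (mod M)` give
`M ∣ S·S̄`. As `deg S ≤ 1` and `S·S̄ ≠ 0`, the product `S·S̄` has degree exactly `2`, and its
leading coefficient `a·ā`, with `a` the coefficient of `t` in `S`, is nonzero. A dual quaternion
`a` with `a·ā ≠ 0` has nonzero primal part, hence is invertible, so `S = a t + b` has the unique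
right zero `-a⁻¹ b`. -/

theorem commute_map_algebraMap {R A : Type*} [CommSemiring R] [Semiring A] [Algebra R A]
    (M : R[X]) (p : A[X]) : Commute (M.map (algebraMap R A)) p := by
  induction M using Polynomial.induction_on' with
  | add M N hM hN => simpa only [Polynomial.map_add] using hM.add_left hN
  | monomial n r =>
    rw [map_monomial, ← C_mul_X_pow_eq_monomial, ← Polynomial.algebraMap_apply]
    exact Commute.mul_left (Algebra.commutes r p) (commute_X_pow p n)

theorem dvd_sub_mul_mul_sub {α : Type*} [Ring α] {m f g : α} (q q' : α)
    (hm : ∀ x, Commute m x) (h : m ∣ f * g) : m ∣ (f - q * m) * (g - m * q') := by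
  have expand : (f - q * m) * (g - m * q') =
      f * g - m * (f * q') - m * (q * g) + m * (q * (m * q')) := by
    simp only [sub_mul, mul_sub, mul_assoc, (hm f).symm.left_comm, (hm q).symm.left_comm]
    abel
  rw [expand]
  exact ((h.sub (dvd_mul_right _ _)).sub (dvd_mul_right _ _)).add (dvd_mul_right _ _)

theorem Polynomial.Monic.natDegree_le_of_dvd {R : Type*} [Semiring R] {p q : R[X]}
    (hq : q.Monic) (hdvd : q ∣ p) (hp : p ≠ 0) : q.natDegree ≤ p.natDegree := by
  obtain ⟨c, rfl⟩ := hdvd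
  rw [hq.natDegree_mul' (right_ne_zero_of_mul hp)]
  exact Nat.le_add_right _ _

theorem existsUnique_eval_eq_zero_of_natDegree_le_one {R : Type*} [Ring R] {p : R[X]}
    (hp : p.natDegree ≤ 1) (hu : IsUnit (p.coeff 1)) : ∃! x, p.eval x = 0 := by
  obtain ⟨u, hu⟩ := hu
  have heval : ∀ x, p.eval x = u * x + p.coeff 0 := fun x => by
    conv_lhs => rw [eq_X_add_C_of_natDegree_le_one hp]
    simp [hu]
  refine ⟨-(↑u⁻¹ * p.coeff 0), by simp [heval, ← mul_assoc], fun y (hy : p.eval y = 0) => ?_⟩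
  rw [heval, add_eq_zero_iff_eq_neg] at hy
  rw [← mul_neg, ← hy, ← mul_assoc, Units.inv_mul, one_mul]

@[simp] theorem dconj_fst (x : DH) : (dconj x).fst = star x.fst := rfl
@[simp] theorem dconj_snd (x : DH) : (dconj x).snd = star x.snd := rfl

theorem dconj_zero : dconj 0 = 0 :=
  TrivSqZeroExt.ext (by simp) (by simp)

theorem dconj_add (x y : DH) : dconj (x + y) = dconj x + dconj y :=
  TrivSqZeroExt.ext (by simp) (by simp)

theorem dconj_mul (x y : DH) : dconj (x * y) = dconj y * dconj x :=
  TrivSqZeroExt.ext (by simp [TrivSqZeroExt.fst_mul])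
    (by simp [TrivSqZeroExt.snd_mul, add_comm])

theorem dconj_algebraMap (r : ℝ) : dconj (algebraMap ℝ DH r) = algebraMap ℝ DH r :=
  TrivSqZeroExt.ext (by simp [TrivSqZeroExt.algebraMap_eq_inl'])
    (by simp [TrivSqZeroExt.algebraMap_eq_inl'])

theorem dconj_sum {ι : Type*} (s : Finset ι) (f : ι → DH) :
    dconj (∑ i ∈ s, f i) = ∑ i ∈ s, dconj (f i) :=
  map_sum (AddMonoidHom.mk' dconj dconj_add) f s

theorem isUnit_of_mul_dconj_ne_zero {x : DH} (hx : x * dconj x ≠ 0) : IsUnit x := by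
  refine TrivSqZeroExt.isUnit_iff_isUnit_fst.mpr (isUnit_iff_ne_zero.mpr fun h0 => hx ?_)
  exact TrivSqZeroExt.ext (by simp [TrivSqZeroExt.fst_mul, h0])
    (by simp [TrivSqZeroExt.snd_mul, h0])

theorem dpconj_coeff (p : DH[X]) (n : ℕ) : (dpconj p).coeff n = dconj (p.coeff n) := rfl

theorem natDegree_dpconj_le (p : DH[X]) : (dpconj p).natDegree ≤ p.natDegree :=
  natDegree_le_iff_coeff_eq_zero.mpr fun n hn => by
    rw [dpconj_coeff, coeff_eq_zero_of_natDegree_lt hn, dconj_zero]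

theorem dpconj_add (p q : DH[X]) : dpconj (p + q) = dpconj p + dpconj q :=
  Polynomial.ext fun n => by simp only [dpconj_coeff, coeff_add, dconj_add]

theorem dpconj_mul (p q : DH[X]) : dpconj (p * q) = dpconj q * dpconj p := by
  refine Polynomial.ext fun n => ?_
  rw [dpconj_coeff, coeff_mul, coeff_mul, dconj_sum, ← Finset.Nat.sum_antidiagonal_swap]
  exact Finset.sum_congr rfl fun x _ => by simp [dconj_mul, dpconj_coeff]

theorem dpconj_map_algebraMap (M : ℝ[X]) :
    dpconj (M.map (algebraMap ℝ DH)) = M.map (algebraMap ℝ DH) :=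
  Polynomial.ext fun n => by rw [dpconj_coeff, coeff_map, dconj_algebraMap]

theorem map_dvd_mul_dpconj_of_eq_add (M : ℝ[X]) {F Qd S : DH[X]}
    (hdvd : M.map (algebraMap ℝ DH) ∣ F * dpconj F)
    (hrem : F = Qd * M.map (algebraMap ℝ DH) + S) :
    M.map (algebraMap ℝ DH) ∣ S * dpconj S := by
  have hS : S = F - Qd * M.map (algebraMap ℝ DH) := eq_sub_of_add_eq' hrem.symm
  have hdS : dpconj S = dpconj F - M.map (algebraMap ℝ DH) * dpconj Qd := by
    rw [hrem, dpconj_add, dpconj_mul, dpconj_map_algebraMap, add_sub_cancel_left]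
  rw [hdS, hS]
  exact dvd_sub_mul_mul_sub _ _ (commute_map_algebraMap M) hdvd

theorem motion_remainder_unique_zero_general (F : Polynomial DH)
    (M : Polynomial ℝ) (hM : M.Monic) (hMdeg : M.degree = 2)
    (hdvd : M.map (algebraMap ℝ DH) ∣ F * dpconj F)
    (Qd S : Polynomial DH)
    (hrem : F = Qd * M.map (algebraMap ℝ DH) + S) (hSdeg : S.degree < 2)
    (hnu : S * dpconj S ≠ 0) :
    S.degree = 1 ∧ IsUnit S.leadingCoeff ∧ ∃! h : DH, S.eval h = 0 := by
  have hS : S.natDegree ≤ 1 :=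
    Nat.lt_succ_iff.mp ((natDegree_lt_iff_degree_lt (left_ne_zero_of_mul hnu)).mpr hSdeg)
  have hSbar : (dpconj S).natDegree ≤ 1 := (natDegree_dpconj_le S).trans hS
  have hM2 : (M.map (algebraMap ℝ DH)).natDegree = 2 := by
    rw [hM.natDegree_map, natDegree_eq_of_degree_eq_some hMdeg]
  have hnu2 : (S * dpconj S).natDegree = 2 := by
    have := (hM.map _).natDegree_le_of_dvd (map_dvd_mul_dpconj_of_eq_add M hdvd hrem) hnu
    have := natDegree_mul_le_of_le hS hSbar
    omega
  have ha : S.coeff 1 * dconj (S.coeff 1) ≠ 0 := by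
    rw [← dpconj_coeff, ← coeff_mul_add_eq_of_natDegree_le hS hSbar]
    have := leadingCoeff_ne_zero.mpr hnu
    rwa [leadingCoeff, hnu2] at this
  have hunit : IsUnit (S.coeff 1) := isUnit_of_mul_dconj_ne_zero ha
  have hS1 : S.natDegree = 1 := hS.antisymm (le_natDegree_of_ne_zero hunit.ne_zero)
  refine ⟨(degree_eq_iff_natDegree_eq (left_ne_zero_of_mul hnu)).mpr hS1, ?_,
    existsUnique_eval_eq_zero_of_natDegree_le_one hS hunit⟩
  rwa [leadingCoeff, hS1]

/-- If `M` is a monic real quadratic factor of the norm polynomial of a monic motion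
polynomial `F = P + εQ` which is not a pseudofactor of `F` (the remainder
`S = lrem(F, M)` has nonvanishing norm), then `S` is linear with invertible leading
coefficient and has a unique right zero. -/
theorem motion_remainder_unique_zero (P Q : Polynomial (Quaternion ℝ)) (F : Polynomial DH)
    (hF : ∀ i, F.coeff i = (P.coeff i, Q.coeff i))
    (hFmonic : F.Monic)
    (hmotion : ∀ i, ∃ r : ℝ, (F * dpconj F).coeff i = algebraMap ℝ DH r)
    (hne : F * dpconj F ≠ 0)
    (M : Polynomial ℝ) (hM : M.Monic) (hMdeg : M.degree = 2)
    (hdvd : M.map (algebraMap ℝ DH) ∣ F * dpconj F)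
    (Qd S : Polynomial DH)
    (hrem : F = Qd * M.map (algebraMap ℝ DH) + S) (hSdeg : S.degree < 2)
    (hnu : S * dpconj S ≠ 0) :
    S.degree = 1 ∧ IsUnit S.leadingCoeff ∧ ∃! h : DH, S.eval h = 0 :=
  motion_remainder_unique_zero_general F M hM hMdeg hdvd Qd S hrem hSdeg hnu
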